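/- arXiv:1904.10686 — 2 statements merged into one kernel-verified Lean document; each statement's English description precedes it below -/
import Mathlib

section
/- Under the standing hypotheses (with K contained in D_e), the dimension of D as a K-vector space equals dim_L(D_e) · |H| · [G:H]²; equivalently, the degree of D over K is √(dim_L(D_e)) · √|H| · [G:H]. -/
variable {G : Type*} [Group G] [DecidableEq G] {D : Type*} [DivisionRing D]

/-- A faithful `G`-grading on `D`: a family of additive subgroups forming an internal
direct sum decomposition, multiplicative, with all components nonzero. -/
structure IsFaithfulGrading (𝒜 : G → AddSubgroup D) : Prop where
  one_mem : (1 : D) ∈ 𝒜 1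
  mul_mem : ∀ {g h : G} {x y : D}, x ∈ 𝒜 g → y ∈ 𝒜 h → x * y ∈ 𝒜 (g * h)
  isInternal : DirectSum.IsInternal 𝒜
  faithful : ∀ g, 𝒜 g ≠ ⊥

/-- `L`, the center of the identity component `D_e`, as a set. -/
def Lset (𝒜 : G → AddSubgroup D) : Set D := {x | x ∈ 𝒜 1 ∧ ∀ y ∈ 𝒜 1, x * y = y * x}

/-- The kernel of the conjugation action of `G` on `L`, as a set:
`{g ∈ G : x·l = l·x for every x ∈ D_g and every l ∈ L}`. -/
def Hset (𝒜 : G → AddSubgroup D) : Set G := {g | ∀ x ∈ 𝒜 g, ∀ l ∈ Lset 𝒜, x * l = l * x}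

/-- The identity component `D_e` as a subring of `D`. -/
def De (𝒜 : G → AddSubgroup D) (hG : IsFaithfulGrading 𝒜) : Subring D where
  carrier := 𝒜 1
  zero_mem' := zero_mem _
  one_mem' := hG.one_mem
  add_mem' := fun ha hb => add_mem ha hb
  neg_mem' := fun ha => neg_mem ha
  mul_mem' := fun ha hb => by simpa using hG.mul_mem ha hb

/-- `L`, the center of the identity component, as a subring of `D`. -/
def Lring (𝒜 : G → AddSubgroup D) (hG : IsFaithfulGrading 𝒜) : Subring D where
  carrier := Lset 𝒜
  zero_mem' := ⟨zero_mem _, fun y _ => by rw [zero_mul, mul_zero]⟩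
  one_mem' := ⟨hG.one_mem, fun y _ => by rw [one_mul, mul_one]⟩
  add_mem' := fun ha hb => ⟨add_mem ha.1 hb.1, fun y hy => by
    rw [add_mul, mul_add, ha.2 y hy, hb.2 y hy]⟩
  neg_mem' := fun ha => ⟨neg_mem ha.1, fun y hy => by rw [neg_mul, mul_neg, ha.2 y hy]⟩
  mul_mem' := fun {a b} ha hb => ⟨by simpa using hG.mul_mem ha.1 hb.1,
    fun y hy => by rw [mul_assoc, hb.2 y hy, ← mul_assoc, ha.2 y hy, mul_assoc]⟩

lemma Lring_le_De (𝒜 : G → AddSubgroup D) (hG : IsFaithfulGrading 𝒜) :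
    Lring 𝒜 hG ≤ De 𝒜 hG := fun _ hx => hx.1

/-- `dim_L D_e`, the dimension of the identity component over its center `L`. -/
noncomputable def dimLDe (𝒜 : G → AddSubgroup D) (hG : IsFaithfulGrading 𝒜) : ℕ :=
  letI : Module ↥(Lring 𝒜 hG) ↥(De 𝒜 hG) :=
    (Subring.inclusion (Lring_le_De 𝒜 hG)).toModule
  Module.finrank ↥(Lring 𝒜 hG) ↥(De 𝒜 hG)

section Aux

open DirectSum

variable {𝒜 : G → AddSubgroup D}

lemma exists_ne_zero (hG : IsFaithfulGrading 𝒜) (g : G) : ∃ x : D, x ∈ 𝒜 g ∧ x ≠ 0 := by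
  by_contra h
  push_neg at h
  refine hG.faithful g ?_
  ext x
  simp only [AddSubgroup.mem_bot]
  exact ⟨fun hx => by by_contra hne; exact hne (h x hx), fun hx => hx ▸ zero_mem _⟩

lemma proj_mul_left (hG : IsFaithfulGrading 𝒜) [DirectSum.Decomposition 𝒜]
    {g : G} {x : D} (hx : x ∈ 𝒜 g) (y : D) (h : G) :
    ((decompose 𝒜 (x * y) (g * h) : D)) = x * (decompose 𝒜 y h : D) := by
  induction y using DirectSum.Decomposition.inductionOn 𝒜 with
  | zero => simp
  | @homogeneous k m =>
      rcases eq_or_ne k h with rfl | hkh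
      · rw [decompose_of_mem_same 𝒜 m.2, decompose_of_mem_same 𝒜 (hG.mul_mem hx m.2)]
      · rw [decompose_of_mem_ne 𝒜 m.2 hkh,
          decompose_of_mem_ne 𝒜 (hG.mul_mem hx m.2)
            (fun hgh => hkh (mul_left_cancel hgh))]
        simp
  | add a b ha hb =>
      rw [mul_add, decompose_add, DirectSum.add_apply, AddSubgroup.coe_add, ha, hb,
        decompose_add, DirectSum.add_apply, AddSubgroup.coe_add, mul_add]

lemma inv_mem' (hG : IsFaithfulGrading 𝒜) {g : G} {x : D} (hx : x ∈ 𝒜 g) : x⁻¹ ∈ 𝒜 g⁻¹ := by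
  rcases eq_or_ne x 0 with rfl | hx0
  · simp [zero_mem]
  letI := hG.isInternal.chooseDecomposition
  have key : ∀ h : G, h ≠ g⁻¹ → (decompose 𝒜 x⁻¹ h : D) = 0 := by
    intro h hh
    have h1 : (decompose 𝒜 (x * x⁻¹) (g * h) : D) = 0 := by
      rw [mul_inv_cancel₀ hx0]
      refine decompose_of_mem_ne 𝒜 hG.one_mem ?_
      intro hgh
      exact hh (inv_eq_of_mul_eq_one_right hgh.symm).symm
    rw [proj_mul_left hG hx] at h1
    exact (mul_eq_zero.mp h1).resolve_left hx0
  classical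
  rw [← DirectSum.sum_support_decompose 𝒜 x⁻¹]
  refine sum_mem fun i hi => ?_
  rcases eq_or_ne i g⁻¹ with rfl | hig
  · exact (decompose 𝒜 x⁻¹ g⁻¹).2
  · exact absurd (Subtype.ext (key i hig)) (by simpa using hi)

lemma span_component (hG : IsFaithfulGrading 𝒜) {g : G} {x y : D} (hx : x ∈ 𝒜 g) (hx0 : x ≠ 0)
    (hy : y ∈ 𝒜 g) : ∃ a ∈ 𝒜 1, y = a * x := by
  refine ⟨y * x⁻¹, by simpa using hG.mul_mem hy (inv_mem' hG hx), ?_⟩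
  rw [mul_assoc, inv_mul_cancel₀ hx0, mul_one]

lemma conj_mem_Lset (hG : IsFaithfulGrading 𝒜) {g : G} {x l : D} (hx : x ∈ 𝒜 g) (hx0 : x ≠ 0)
    (hl : l ∈ Lset 𝒜) : x * l * x⁻¹ ∈ Lset 𝒜 := by
  constructor
  · simpa using hG.mul_mem (hG.mul_mem hx hl.1) (inv_mem' hG hx)
  · intro y hy
    have h1 : x⁻¹ * y * x ∈ 𝒜 1 := by simpa using hG.mul_mem (hG.mul_mem (inv_mem' hG hx) hy) hx
    have h2 := hl.2 _ h1
    have e1 : x * (l * (x⁻¹ * y * x)) * x⁻¹ = x * ((x⁻¹ * y * x) * l) * x⁻¹ := by rw [h2]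
    calc x * l * x⁻¹ * y = x * (l * (x⁻¹ * y * x)) * x⁻¹ := by
          simp [mul_assoc, mul_inv_cancel_left₀ hx0, inv_mul_cancel_left₀ hx0,
            mul_inv_cancel₀ hx0, inv_mul_cancel₀ hx0]
      _ = x * ((x⁻¹ * y * x) * l) * x⁻¹ := e1
      _ = y * (x * l * x⁻¹) := by
          simp [mul_assoc, mul_inv_cancel_left₀ hx0, inv_mul_cancel_left₀ hx0,
            mul_inv_cancel₀ hx0, inv_mul_cancel₀ hx0]

lemma conj_eq_conj (hG : IsFaithfulGrading 𝒜) {g : G} {x x' l : D} (hx : x ∈ 𝒜 g) (hx0 : x ≠ 0)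
    (hx' : x' ∈ 𝒜 g) (hx0' : x' ≠ 0) (hl : l ∈ Lset 𝒜) :
    x * l * x⁻¹ = x' * l * x'⁻¹ := by
  obtain ⟨a, ha, rfl⟩ := span_component hG hx hx0 hx'
  have ha0 : a ≠ 0 := fun h => hx0' (by simp [h])
  have hinv : (a * x)⁻¹ = x⁻¹ * a⁻¹ := mul_inv_rev a x
  have hcomm : a * (x * l * x⁻¹) = (x * l * x⁻¹) * a :=
    ((conj_mem_Lset hG hx hx0 hl).2 a ha).symm
  rw [hinv]
  calc x * l * x⁻¹ = a * (x * l * x⁻¹) * a⁻¹ := by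
        rw [hcomm, mul_assoc (x * l * x⁻¹) a a⁻¹, mul_inv_cancel₀ ha0, mul_one]
    _ = a * x * l * (x⁻¹ * a⁻¹) := by simp [mul_assoc]

lemma inv_mem_Lset (hG : IsFaithfulGrading 𝒜) {l : D} (hl : l ∈ Lset 𝒜) (hl0 : l ≠ 0) :
    l⁻¹ ∈ Lset 𝒜 := by
  refine ⟨by simpa using inv_mem' hG hl.1, fun y hy => ?_⟩
  have := hl.2 y hy
  calc l⁻¹ * y = l⁻¹ * y * l * l⁻¹ := by
        rw [mul_assoc, mul_inv_cancel₀ hl0, mul_one]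
    _ = l⁻¹ * l * y * l⁻¹ := by rw [mul_assoc l⁻¹ y l, ← this, ← mul_assoc]
    _ = y * l⁻¹ := by rw [inv_mul_cancel₀ hl0, one_mul]

omit [DecidableEq G] in
lemma center_subset_Lset (hKe : (Subring.center D : Set D) ⊆ 𝒜 1) :
    (Subring.center D : Set D) ⊆ Lset 𝒜 := fun k hk =>
  ⟨hKe hk, fun y _ => (Subring.mem_center_iff.mp hk y).symm⟩

lemma mem_center_of_commutes (hG : IsFaithfulGrading 𝒜) {l : D}
    (hl : ∀ g : G, ∀ x ∈ 𝒜 g, x * l = l * x) : l ∈ Subring.center D := by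
  rw [Subring.mem_center_iff]
  intro d
  letI := hG.isInternal.chooseDecomposition
  classical
  rw [← DirectSum.sum_support_decompose 𝒜 d, Finset.sum_mul, Finset.mul_sum]
  exact Finset.sum_congr rfl fun i _ => hl i _ (DirectSum.decompose 𝒜 d i).2

lemma center_le_Lring (hG : IsFaithfulGrading 𝒜)
    (hKe : (Subring.center D : Set D) ⊆ 𝒜 1) :
    Subring.center D ≤ Lring 𝒜 hG := fun k hk => center_subset_Lset hKe hk

/-- `L` is a field. -/
@[reducible] noncomputable def LField (hG : IsFaithfulGrading 𝒜) : Field ↥(Lring 𝒜 hG) := by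
  refine IsField.toField ⟨⟨0, 1, fun h => ?_⟩, fun a b => ?_, fun {a} ha => ?_⟩
  · exact zero_ne_one (congrArg Subtype.val h)
  · exact Subtype.ext (a.2.2 b.1 b.2.1)
  · have ha0 : (a : D) ≠ 0 := fun h => ha (Subtype.ext h)
    exact ⟨⟨(a : D)⁻¹, inv_mem_Lset hG a.2 ha0⟩, Subtype.ext (mul_inv_cancel₀ ha0)⟩

end Aux

section Conj

open DirectSum

variable {𝒜 : G → AddSubgroup D}

/-- A choice of nonzero homogeneous element in each component. -/
noncomputable def xs (hG : IsFaithfulGrading 𝒜) (g : G) : D :=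
  (exists_ne_zero hG g).choose

lemma xs_mem (hG : IsFaithfulGrading 𝒜) (g : G) : xs hG g ∈ 𝒜 g :=
  (exists_ne_zero hG g).choose_spec.1

lemma xs_ne_zero (hG : IsFaithfulGrading 𝒜) (g : G) : xs hG g ≠ 0 :=
  (exists_ne_zero hG g).choose_spec.2

lemma conj_in_one (hG : IsFaithfulGrading 𝒜) {a l : D} (ha : a ∈ 𝒜 1) (ha0 : a ≠ 0)
    (hl : l ∈ Lset 𝒜) : a * l * a⁻¹ = l := by
  rw [← hl.2 a ha, mul_assoc, mul_inv_cancel₀ ha0, mul_one]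

lemma conj_conj (hG : IsFaithfulGrading 𝒜) (g h : G) {l : D} (hl : l ∈ Lset 𝒜) :
    xs hG g * (xs hG h * l * (xs hG h)⁻¹) * (xs hG g)⁻¹
      = xs hG (g * h) * l * (xs hG (g * h))⁻¹ := by
  have h1 : xs hG g * xs hG h ∈ 𝒜 (g * h) := hG.mul_mem (xs_mem hG g) (xs_mem hG h)
  have h0 : xs hG g * xs hG h ≠ 0 := mul_ne_zero (xs_ne_zero hG g) (xs_ne_zero hG h)
  calc xs hG g * (xs hG h * l * (xs hG h)⁻¹) * (xs hG g)⁻¹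
      = (xs hG g * xs hG h) * l * (xs hG g * xs hG h)⁻¹ := by
        rw [mul_inv_rev]; simp [mul_assoc]
    _ = xs hG (g * h) * l * (xs hG (g * h))⁻¹ :=
        conj_eq_conj hG h1 h0 (xs_mem hG (g * h)) (xs_ne_zero hG (g * h)) hl

lemma conj_cancel (hG : IsFaithfulGrading 𝒜) (g : G) {l : D} (hl : l ∈ Lset 𝒜) :
    xs hG g⁻¹ * (xs hG g * l * (xs hG g)⁻¹) * (xs hG g⁻¹)⁻¹ = l := by
  rw [conj_conj hG g⁻¹ g (l := l) hl, inv_mul_cancel]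
  exact conj_in_one hG (xs_mem hG 1) (xs_ne_zero hG 1) hl

lemma conj_cancel' (hG : IsFaithfulGrading 𝒜) (g : G) {l : D} (hl : l ∈ Lset 𝒜) :
    xs hG g * (xs hG g⁻¹ * l * (xs hG g⁻¹)⁻¹) * (xs hG g)⁻¹ = l := by
  rw [conj_conj hG g g⁻¹ (l := l) hl, mul_inv_cancel]
  exact conj_in_one hG (xs_mem hG 1) (xs_ne_zero hG 1) hl

/-- The conjugation action of `G` on `L`, as a monoid hom to ring automorphisms. -/
noncomputable def conjHom (hG : IsFaithfulGrading 𝒜) : G →* RingAut ↥(Lring 𝒜 hG) where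
  toFun g :=
    { toFun := fun l => ⟨xs hG g * l * (xs hG g)⁻¹,
        conj_mem_Lset hG (xs_mem hG g) (xs_ne_zero hG g) l.2⟩
      invFun := fun l => ⟨xs hG g⁻¹ * l * (xs hG g⁻¹)⁻¹,
        conj_mem_Lset hG (xs_mem hG g⁻¹) (xs_ne_zero hG g⁻¹) l.2⟩
      left_inv := fun l => Subtype.ext (conj_cancel hG g l.2)
      right_inv := fun l => Subtype.ext (conj_cancel' hG g l.2)
      map_mul' := fun l l' => Subtype.ext (by
        have h0 := xs_ne_zero hG g
        show xs hG g * (↑l * ↑l') * (xs hG g)⁻¹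
          = (xs hG g * ↑l * (xs hG g)⁻¹) * (xs hG g * ↑l' * (xs hG g)⁻¹)
        simp [mul_assoc, inv_mul_cancel_left₀ h0])
      map_add' := fun l l' => Subtype.ext (by
        show xs hG g * (↑l + ↑l') * (xs hG g)⁻¹
          = xs hG g * ↑l * (xs hG g)⁻¹ + xs hG g * ↑l' * (xs hG g)⁻¹
        rw [mul_add, add_mul]) }
  map_one' := RingEquiv.ext fun l => Subtype.ext
    (conj_in_one hG (xs_mem hG 1) (xs_ne_zero hG 1) l.2)
  map_mul' := fun g h => RingEquiv.ext fun l => Subtype.ext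
    (conj_conj hG g h l.2).symm

lemma conjHom_apply_val (hG : IsFaithfulGrading 𝒜) (g : G) (l : ↥(Lring 𝒜 hG)) :
    (conjHom hG g l : D) = xs hG g * l * (xs hG g)⁻¹ := rfl

lemma mem_ker_conjHom_iff (hG : IsFaithfulGrading 𝒜) (g : G) :
    g ∈ (conjHom hG).ker ↔ g ∈ Hset 𝒜 := by
  rw [MonoidHom.mem_ker]
  constructor
  · intro hker x hx l hl
    rcases eq_or_ne x 0 with rfl | hx0
    · rw [zero_mul, mul_zero]
    have h1 : ((conjHom hG g (⟨l, hl⟩ : ↥(Lring 𝒜 hG)) : ↥(Lring 𝒜 hG)) : D) = l := by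
      rw [hker]; rfl
    rw [conjHom_apply_val] at h1
    have h2 : xs hG g * l = l * xs hG g := by
      have := congrArg (· * xs hG g) h1
      simpa [mul_assoc, inv_mul_cancel₀ (xs_ne_zero hG g)] using this
    obtain ⟨a, ha, rfl⟩ := span_component hG (xs_mem hG g) (xs_ne_zero hG g) hx
    calc a * xs hG g * l = a * (l * xs hG g) := by rw [mul_assoc, h2]
      _ = l * (a * xs hG g) := by rw [← mul_assoc, ← hl.2 a ha, mul_assoc]
  · intro hg
    refine RingEquiv.ext fun l => Subtype.ext ?_
    rw [conjHom_apply_val]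
    have := hg (xs hG g) (xs_mem hG g) l l.2
    rw [this, mul_assoc, mul_inv_cancel₀ (xs_ne_zero hG g), mul_one]
    rfl

set_option maxHeartbeats 1000000 in
set_option synthInstance.maxHeartbeats 200000 in
lemma finrank_center_L [Finite G] (hG : IsFaithfulGrading 𝒜)
    (hKe : (Subring.center D : Set D) ⊆ 𝒜 1) (H : Subgroup G)
    (hHcar : (H : Set G) = Hset 𝒜) :
    letI : Field ↥(Lring 𝒜 hG) := LField hG
    letI : Module ↥(Subring.center D) ↥(Lring 𝒜 hG) :=
      (Subring.inclusion (center_le_Lring hG hKe)).toModule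
    Module.finrank ↥(Subring.center D) ↥(Lring 𝒜 hG) = H.index := by
  letI : Field ↥(Lring 𝒜 hG) := LField hG
  letI : Module ↥(Subring.center D) ↥(Lring 𝒜 hG) :=
    (Subring.inclusion (center_le_Lring hG hKe)).toModule
  set σ := conjHom hG with hσ
  set Q := σ.range with hQ
  haveI : Finite Q := Finite.of_surjective σ.rangeRestrict σ.rangeRestrict_surjective
  haveI : Fintype Q := Fintype.ofFinite Q
  letI : MulSemiringAction Q ↥(Lring 𝒜 hG) := MulSemiringAction.compHom _ Q.subtype
  have smul_def : ∀ (q : Q) (l : ↥(Lring 𝒜 hG)), q • l = (q : RingAut ↥(Lring 𝒜 hG)) l :=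
    fun _ _ => rfl
  haveI hfaith : FaithfulSMul Q ↥(Lring 𝒜 hG) :=
    ⟨fun {q1 q2} h => Subtype.ext (RingEquiv.ext fun l => by
      have := h (a := l); rwa [smul_def, smul_def] at this)⟩
  have hArtin := @FixedPoints.finrank_eq_card Q ↥(Lring 𝒜 hG) _ _ _ _ hfaith
  have hker : σ.ker = H := Subgroup.ext fun g => by
    rw [mem_ker_conjHom_iff hG g, ← SetLike.mem_coe (p := H), hHcar]
  have hcard : Fintype.card Q = H.index := by
    rw [← Nat.card_eq_fintype_card, ← Subgroup.index_ker σ, hker]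
  rw [← hcard, ← hArtin]
  set F₀ := FixedPoints.subfield Q ↥(Lring 𝒜 hG) with hF₀
  have hmem : ∀ l : ↥(Lring 𝒜 hG), l ∈ F₀ ↔ ∀ q : Q, q • l = l := fun l => Iff.rfl
  have hfix : ∀ (k : ↥(Subring.center D)),
      (⟨(k : D), center_subset_Lset hKe k.2⟩ : ↥(Lring 𝒜 hG)) ∈ F₀ := by
    intro k
    rw [hmem]
    rintro ⟨q, g, rfl⟩
    rw [smul_def]
    refine Subtype.ext ?_
    rw [conjHom_apply_val]
    have : xs hG g * (k : D) = (k : D) * xs hG g := Subring.mem_center_iff.mp k.2 _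
    show xs hG g * (k : D) * (xs hG g)⁻¹ = (k : D)
    rw [this, mul_assoc, mul_inv_cancel₀ (xs_ne_zero hG g), mul_one]
  set i : ↥(Subring.center D) → F₀ := fun k => ⟨⟨(k : D), center_subset_Lset hKe k.2⟩, hfix k⟩
    with hi
  have hbij : Function.Bijective i := by
    constructor
    · intro a b hab
      exact Subtype.ext (congrArg (fun z : F₀ => ((z : ↥(Lring 𝒜 hG)) : D)) hab)
    · rintro ⟨l, hl⟩
      rw [hmem] at hl
      have hcomm : ∀ g : G, ∀ x ∈ 𝒜 g, x * (l : D) = (l : D) * x := by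
        intro g x hx
        rcases eq_or_ne x 0 with rfl | hx0
        · rw [zero_mul, mul_zero]
        have hq : σ g ∈ Q := ⟨g, rfl⟩
        have h1 : ((σ g l : ↥(Lring 𝒜 hG)) : D) = (l : D) := by
          have := hl ⟨σ g, hq⟩
          rw [smul_def] at this
          exact congrArg Subtype.val this
        rw [conjHom_apply_val] at h1
        have h2 : xs hG g * (l : D) = (l : D) * xs hG g := by
          have := congrArg (· * xs hG g) h1
          simpa [mul_assoc, inv_mul_cancel₀ (xs_ne_zero hG g)] using this
        obtain ⟨a, ha, rfl⟩ := span_component hG (xs_mem hG g) (xs_ne_zero hG g) hx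
        calc a * xs hG g * (l : D) = a * ((l : D) * xs hG g) := by rw [mul_assoc, h2]
          _ = (l : D) * (a * xs hG g) := by rw [← mul_assoc, ← l.2.2 a ha, mul_assoc]
      have hc : (l : D) ∈ Subring.center D := mem_center_of_commutes hG hcomm
      exact ⟨⟨(l : D), hc⟩, Subtype.ext (Subtype.ext rfl)⟩
  have hrank := rank_eq_of_equiv_equiv (R := ↥(Subring.center D)) (R' := F₀)
    (M := ↥(Lring 𝒜 hG)) (M₁ := ↥(Lring 𝒜 hG))
    i (AddEquiv.refl _) hbij
    (fun r m => Subtype.ext rfl)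
  exact congrArg Cardinal.toNat hrank

end Conj

section DimCount

variable {𝒜 : G → AddSubgroup D}

/-- The components as submodules over the center. -/
def KsubMod (hG : IsFaithfulGrading 𝒜) (hKe : (Subring.center D : Set D) ⊆ 𝒜 1) (g : G) :
    Submodule ↥(Subring.center D) D where
  carrier := 𝒜 g
  add_mem' := fun ha hb => add_mem ha hb
  zero_mem' := zero_mem _
  smul_mem' := fun k x hx => by
    show (k : D) * x ∈ 𝒜 g
    simpa using hG.mul_mem (hKe k.2) hx

lemma KsubMod_isInternal (hG : IsFaithfulGrading 𝒜)
    (hKe : (Subring.center D : Set D) ⊆ 𝒜 1) :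
    DirectSum.IsInternal (KsubMod hG hKe) := hG.isInternal

/-- Right multiplication by a nonzero homogeneous element, as a `K`-linear equiv. -/
noncomputable def mulRightEquiv (hG : IsFaithfulGrading 𝒜)
    (hKe : (Subring.center D : Set D) ⊆ 𝒜 1) (g h : G) {x : D} (hx : x ∈ 𝒜 h) (hx0 : x ≠ 0) :
    ↥(KsubMod hG hKe g) ≃ₗ[↥(Subring.center D)] ↥(KsubMod hG hKe (g * h)) where
  toFun y := ⟨(y : D) * x, hG.mul_mem y.2 hx⟩
  invFun z := ⟨(z : D) * x⁻¹, by
    have := hG.mul_mem z.2 (inv_mem' hG hx)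
    exact (by simpa using this : (z : D) * x⁻¹ ∈ 𝒜 g)⟩
  left_inv := fun y => Subtype.ext (by
    show (y : D) * x * x⁻¹ = y
    rw [mul_assoc, mul_inv_cancel₀ hx0, mul_one])
  right_inv := fun z => Subtype.ext (by
    show (z : D) * x⁻¹ * x = z
    rw [mul_assoc, inv_mul_cancel₀ hx0, mul_one])
  map_add' := fun y z => Subtype.ext (add_mul _ _ _)
  map_smul' := fun k y => Subtype.ext (mul_assoc (k : D) (y : D) x)

lemma finrank_component_eq (hG : IsFaithfulGrading 𝒜)
    (hKe : (Subring.center D : Set D) ⊆ 𝒜 1) (g : G) :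
    Module.finrank ↥(Subring.center D) ↥(KsubMod hG hKe g)
      = Module.finrank ↥(Subring.center D) ↥(KsubMod hG hKe 1) := by
  obtain ⟨x, hx, hx0⟩ := exists_ne_zero hG g
  have := (mulRightEquiv hG hKe 1 g hx hx0).finrank_eq
  rw [one_mul] at this
  exact this.symm

set_option maxHeartbeats 1000000 in
set_option synthInstance.maxHeartbeats 400000 in
lemma finrank_D_eq_card_mul [Finite G] (hG : IsFaithfulGrading 𝒜)
    (hKe : (Subring.center D : Set D) ⊆ 𝒜 1)
    [Module.Finite ↥(Subring.center D) D] :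
    Module.finrank ↥(Subring.center D) D
      = Nat.card G * Module.finrank ↥(Subring.center D) ↥(KsubMod hG hKe 1) := by
  haveI := Fintype.ofFinite G
  have hint := KsubMod_isInternal hG hKe
  have e := LinearEquiv.ofBijective (DirectSum.coeLinearMap (KsubMod hG hKe)) hint
  rw [← e.finrank_eq, Module.finrank_directSum]
  rw [Finset.sum_congr rfl fun g _ => finrank_component_eq hG hKe g, Finset.sum_const,
    Nat.card_eq_fintype_card, Finset.card_univ, smul_eq_mul]

end DimCount

section PartC

variable {𝒜 : G → AddSubgroup D}

lemma center_le_De (hG : IsFaithfulGrading 𝒜) (hKe : (Subring.center D : Set D) ⊆ 𝒜 1) :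
    Subring.center D ≤ De 𝒜 hG := fun k hk => hKe hk

set_option maxHeartbeats 1000000 in
set_option synthInstance.maxHeartbeats 400000 in
lemma finrank_Ksub_one (hG : IsFaithfulGrading 𝒜)
    (hKe : (Subring.center D : Set D) ⊆ 𝒜 1) :
    letI : Module ↥(Subring.center D) ↥(Lring 𝒜 hG) :=
      (Subring.inclusion (center_le_Lring hG hKe)).toModule
    Module.finrank ↥(Subring.center D) ↥(KsubMod hG hKe 1)
      = Module.finrank ↥(Subring.center D) ↥(Lring 𝒜 hG) * dimLDe 𝒜 hG := by
  letI : Module ↥(Lring 𝒜 hG) ↥(De 𝒜 hG) :=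
    (Subring.inclusion (Lring_le_De 𝒜 hG)).toModule
  letI : Field ↥(Lring 𝒜 hG) := LField hG
  letI : Module ↥(Subring.center D) ↥(Lring 𝒜 hG) :=
    (Subring.inclusion (center_le_Lring hG hKe)).toModule
  letI : Module ↥(Subring.center D) ↥(De 𝒜 hG) :=
    (Subring.inclusion (center_le_De hG hKe)).toModule
  haveI : IsScalarTower ↥(Subring.center D) ↥(Lring 𝒜 hG) ↥(De 𝒜 hG) :=
    ⟨fun k l x => Subtype.ext (mul_assoc (k : D) (l : D) (x : D))⟩
  have hdim : dimLDe 𝒜 hG = Module.finrank ↥(Lring 𝒜 hG) ↥(De 𝒜 hG) := rfl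
  have htower := Module.finrank_mul_finrank (F := ↥(Subring.center D))
    (K := ↥(Lring 𝒜 hG)) (A := ↥(De 𝒜 hG))
  have hequiv : ↥(KsubMod hG hKe 1) ≃ₗ[↥(Subring.center D)] ↥(De 𝒜 hG) :=
    { toFun := fun x => ⟨(x : D), x.2⟩
      invFun := fun x => ⟨(x : D), x.2⟩
      left_inv := fun x => Subtype.ext rfl
      right_inv := fun x => Subtype.ext rfl
      map_add' := fun x y => Subtype.ext rfl
      map_smul' := fun k x => Subtype.ext rfl }
  rw [hdim, hequiv.finrank_eq, ← htower]

end PartC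

/-- Under the standing hypotheses (with the center `K` contained in
`D_e`), `dim_K D = dim_L(D_e) · |H| · [G:H]²`. -/
theorem dim_over_center_eq
    [Finite G] [CharZero D]
    (𝒜 : G → AddSubgroup D) (hG : IsFaithfulGrading 𝒜)
    [Module.Finite ↥(Subring.center D) D]
    (hKe : (Subring.center D : Set D) ⊆ 𝒜 1)
    (ζ : D) (hζK : ζ ∈ Subring.center D)
    (hζ : orderOf ζ = Monoid.exponent G)
    (H : Subgroup G) (hHcar : (H : Set G) = Hset 𝒜) (hHn : H.Normal) :
    Module.finrank ↥(Subring.center D) D = dimLDe 𝒜 hG * Nat.card H * H.index ^ 2 := by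
  letI : Module ↥(Subring.center D) ↥(Lring 𝒜 hG) :=
    (Subring.inclusion (center_le_Lring hG hKe)).toModule
  have h1 := finrank_D_eq_card_mul hG hKe
  have h2 := finrank_Ksub_one hG hKe
  have h3 := finrank_center_L hG hKe H hHcar
  have hcardG : Nat.card G = Nat.card H * H.index := (Subgroup.card_mul_index H).symm
  rw [h1, h2, h3, hcardG]
  ring
end

section
/- Under the standing hypotheses, let L₁ denote the center of the division subring D_H = ⊕_{h ∈ H} D_h. Then K ⊆ L₁; for every g ∈ G and nonzero homogeneous x ∈ D_g, conjugation by x preserves L₁ and the induced automorphism of L₁ is independent of the choice of x, yielding an action of G on L₁ whose kernel is exactly H and whose fixed field is exactly K; and L₁/K is a Galois extension with Galois group isomorphic to G/H. -/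
variable {G : Type*} [Group G] [DecidableEq G] {D : Type*} [DivisionRing D]

/-- `D_N`, the sum `⊕_{n ∈ N} D_n` of the homogeneous components over a subset `N` of
`G`, as an additive subgroup of `D`. -/
def DN (𝒜 : G → AddSubgroup D) (N : Set G) : AddSubgroup D := ⨆ g : N, 𝒜 (g : G)

lemma DN_mul_mem (𝒜 : G → AddSubgroup D) (hG : IsFaithfulGrading 𝒜) {N : Set G}
    (hN : ∀ a ∈ N, ∀ b ∈ N, a * b ∈ N) {x y : D}
    (hx : x ∈ DN 𝒜 N) (hy : y ∈ DN 𝒜 N) : x * y ∈ DN 𝒜 N := by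
  refine AddSubgroup.iSup_induction (C := fun x => x * y ∈ DN 𝒜 N) _ hx ?_
    (by simp [zero_mem]) ?_
  · intro i a ha
    refine AddSubgroup.iSup_induction (C := fun y => a * y ∈ DN 𝒜 N) _ hy ?_
      (by simp [zero_mem]) ?_
    · intro j b hb
      exact AddSubgroup.mem_iSup_of_mem (⟨(i : G) * (j : G), hN _ i.2 _ j.2⟩ : N)
        (hG.mul_mem ha hb)
    · intro u v hu hv; rw [mul_add]; exact add_mem hu hv
  · intro u v hu hv; rw [add_mul]; exact add_mem hu hv

/-- `D_N` as a subring of `D`, for `N` a subgroup of `G`. -/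
def DNsub (𝒜 : G → AddSubgroup D) (hG : IsFaithfulGrading 𝒜) (N : Subgroup G) :
    Subring D where
  carrier := DN 𝒜 (N : Set G)
  zero_mem' := zero_mem _
  one_mem' := AddSubgroup.mem_iSup_of_mem (⟨1, N.one_mem⟩ : (N : Set G)) hG.one_mem
  add_mem' := fun ha hb => add_mem ha hb
  neg_mem' := fun ha => neg_mem ha
  mul_mem' := fun ha hb => DN_mul_mem 𝒜 hG (fun _ ha _ hb => N.mul_mem ha hb) ha hb

/-- `L₁`, the center of `D_H`, as a subring of `D`. -/
def L1ring (𝒜 : G → AddSubgroup D) (hG : IsFaithfulGrading 𝒜) (H : Subgroup G) :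
    Subring D :=
  Subring.centralizer ((DN 𝒜 (H : Set G) : AddSubgroup D) : Set D) ⊓ DNsub 𝒜 hG H


section Aux

variable (𝒜 : G → AddSubgroup D) (hG : IsFaithfulGrading 𝒜)

noncomputable def gEquiv : DirectSum G (fun g => ↥(𝒜 g)) ≃+ D :=
  AddEquiv.ofBijective (DirectSum.coeAddMonoidHom 𝒜) hG.isInternal

noncomputable def prj (g : G) (d : D) : D := (((gEquiv 𝒜 hG).symm d) g : D)

lemma prj_mem (g : G) (d : D) : prj 𝒜 hG g d ∈ 𝒜 g := (((gEquiv 𝒜 hG).symm d) g).2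

lemma gEquiv_of {g : G} {x : D} (hx : x ∈ 𝒜 g) :
    gEquiv 𝒜 hG (DirectSum.of (fun i => ↥(𝒜 i)) g ⟨x, hx⟩) = x := by
  show DirectSum.coeAddMonoidHom 𝒜 (DirectSum.of (fun i => ↥(𝒜 i)) g ⟨x, hx⟩) = x
  simp [DirectSum.coeAddMonoidHom_of]

lemma prj_of_mem {g : G} {x : D} (hx : x ∈ 𝒜 g) : prj 𝒜 hG g x = x := by
  have : (gEquiv 𝒜 hG).symm x = DirectSum.of (fun i => ↥(𝒜 i)) g ⟨x, hx⟩ := by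
    apply (gEquiv 𝒜 hG).injective; simp [gEquiv_of 𝒜 hG hx]
  simp [prj, this, DirectSum.of_apply]

lemma prj_of_mem_ne {g h : G} {x : D} (hx : x ∈ 𝒜 g) (hne : h ≠ g) :
    prj 𝒜 hG h x = 0 := by
  have : (gEquiv 𝒜 hG).symm x = DirectSum.of (fun i => ↥(𝒜 i)) g ⟨x, hx⟩ := by
    apply (gEquiv 𝒜 hG).injective; simp [gEquiv_of 𝒜 hG hx]
  simp [prj, this, DirectSum.of_apply, DFinsupp.single_apply, hne.symm]

lemma prj_add (g : G) (a b : D) :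
    prj 𝒜 hG g (a + b) = prj 𝒜 hG g a + prj 𝒜 hG g b := by
  simp [prj, map_add]

lemma sum_prj [Fintype G] (d : D) : ∑ g, prj 𝒜 hG g d = d := by
  have key : ∀ f : DirectSum G (fun g => ↥(𝒜 g)), gEquiv 𝒜 hG f = ∑ g, ((f g : D)) := by
    intro f
    conv_lhs => rw [← DirectSum.sum_univ_of f]
    rw [map_sum]
    exact Finset.sum_congr rfl fun g _ => gEquiv_of 𝒜 hG (f g).2
  have := key ((gEquiv 𝒜 hG).symm d)
  rw [(gEquiv 𝒜 hG).apply_symm_apply] at this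
  exact this.symm

lemma prj_zero (g : G) : prj 𝒜 hG g (0 : D) = 0 := by simp [prj]

lemma prj_sum (g : G) {ι : Type*} (s : Finset ι) (f : ι → D) :
    prj 𝒜 hG g (∑ i ∈ s, f i) = ∑ i ∈ s, prj 𝒜 hG g (f i) := by
  classical
  induction s using Finset.induction with
  | empty => simp [prj_zero]
  | insert _ _ h ih => rw [Finset.sum_insert h, Finset.sum_insert h, prj_add, ih]

lemma prj_mul_left [Fintype G] {g : G} {x : D} (hx : x ∈ 𝒜 g) (h : G) (d : D) :
    prj 𝒜 hG (g * h) (x * d) = x * prj 𝒜 hG h d := by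
  conv_lhs => rw [← sum_prj 𝒜 hG d, Finset.mul_sum, prj_sum]
  rw [Finset.sum_eq_single h]
  · exact prj_of_mem 𝒜 hG (hG.mul_mem hx (prj_mem 𝒜 hG h d))
  · intro b _ hb
    exact prj_of_mem_ne 𝒜 hG (hG.mul_mem hx (prj_mem 𝒜 hG b d))
      (fun e => hb (mul_left_cancel e).symm)
  · intro hcon; exact absurd (Finset.mem_univ h) hcon

lemma prj_mul_right [Fintype G] {g : G} {x : D} (hx : x ∈ 𝒜 g) (h : G) (d : D) :
    prj 𝒜 hG (h * g) (d * x) = prj 𝒜 hG h d * x := by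
  conv_lhs => rw [← sum_prj 𝒜 hG d, Finset.sum_mul, prj_sum]
  rw [Finset.sum_eq_single h]
  · exact prj_of_mem 𝒜 hG (hG.mul_mem (prj_mem 𝒜 hG h d) hx)
  · intro b _ hb
    exact prj_of_mem_ne 𝒜 hG (hG.mul_mem (prj_mem 𝒜 hG b d) hx)
      (fun e => hb (mul_right_cancel e).symm)
  · intro hcon; exact absurd (Finset.mem_univ h) hcon

include hG in
lemma inv_mem_grade [Fintype G] {g : G} {x : D} (hx : x ∈ 𝒜 g) (hx0 : x ≠ 0) :
    x⁻¹ ∈ 𝒜 g⁻¹ := by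
  have h1 : ∀ h : G, h ≠ g⁻¹ → prj 𝒜 hG h x⁻¹ = 0 := by
    intro h hh
    have key := prj_mul_left 𝒜 hG hx h x⁻¹
    rw [mul_inv_cancel₀ hx0] at key
    rw [prj_of_mem_ne 𝒜 hG hG.one_mem
      (fun e => hh (eq_inv_of_mul_eq_one_right e))] at key
    rcases mul_eq_zero.mp key.symm with h' | h'
    · exact absurd h' hx0
    · exact h'
  have h2 := sum_prj 𝒜 hG x⁻¹
  rw [Finset.sum_eq_single g⁻¹ (fun b _ hb => h1 b hb)
    (fun hcon => absurd (Finset.mem_univ _) hcon)] at h2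
  exact h2 ▸ prj_mem 𝒜 hG g⁻¹ x⁻¹

lemma mem_DN {N : Set G} {g : G} (hg : g ∈ N) {x : D} (hx : x ∈ 𝒜 g) :
    x ∈ DN 𝒜 N :=
  AddSubgroup.mem_iSup_of_mem (⟨g, hg⟩ : N) hx

lemma prj_eq_zero_of_mem_DN {N : Set G} {d : D} (hd : d ∈ DN 𝒜 N) {g : G}
    (hg : g ∉ N) : prj 𝒜 hG g d = 0 := by
  refine AddSubgroup.iSup_induction (C := fun d => prj 𝒜 hG g d = 0) _ hd ?_ (prj_zero 𝒜 hG g) ?_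
  · intro i x hx
    exact prj_of_mem_ne 𝒜 hG hx (fun e => hg (e ▸ i.2))
  · intro a b ha hb; rw [prj_add, ha, hb, add_zero]

lemma mem_DN_of_prj [Fintype G] {N : Set G} {d : D}
    (h : ∀ g : G, prj 𝒜 hG g d ≠ 0 → g ∈ N) : d ∈ DN 𝒜 N := by
  rw [← sum_prj 𝒜 hG d]
  refine sum_mem fun g _ => ?_
  by_cases h0 : prj 𝒜 hG g d = 0
  · rw [h0]; exact zero_mem _
  · exact mem_DN 𝒜 (h g h0) (prj_mem 𝒜 hG g d)

section Mid

variable (H : Subgroup G)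

lemma mem_L1_iff {l : D} :
    l ∈ L1ring 𝒜 hG H ↔
      (∀ d ∈ DN 𝒜 (H : Set G), d * l = l * d) ∧ l ∈ DN 𝒜 (H : Set G) := by
  rw [L1ring, Subring.mem_inf, Subring.mem_centralizer_iff]
  rfl

include hG in
lemma one_mem_DNH : (1 : D) ∈ DN 𝒜 (H : Set G) :=
  mem_DN 𝒜 H.one_mem hG.one_mem

include hG in
lemma grade_one_sub_DNH {x : D} (hx : x ∈ 𝒜 1) : x ∈ DN 𝒜 (H : Set G) :=
  mem_DN 𝒜 H.one_mem hx

include hG in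
lemma conj_mem_DNH [Fintype G] (hHn : H.Normal) {g : G} {x : D} (hx : x ∈ 𝒜 g)
    (hx0 : x ≠ 0) {d : D} (hd : d ∈ DN 𝒜 (H : Set G)) :
    x * d * x⁻¹ ∈ DN 𝒜 (H : Set G) := by
  refine AddSubgroup.iSup_induction
    (C := fun d => x * d * x⁻¹ ∈ DN 𝒜 (H : Set G)) _ hd ?_ (by simp [zero_mem]) ?_
  · rintro ⟨h, hh⟩ a ha
    exact mem_DN 𝒜 (hHn.conj_mem h hh g)
      (hG.mul_mem (hG.mul_mem hx ha) (inv_mem_grade 𝒜 hG hx hx0))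
  · intro a b ha hb
    have : x * (a + b) * x⁻¹ = x * a * x⁻¹ + x * b * x⁻¹ := by noncomm_ring
    rw [this]; exact add_mem ha hb

lemma Lset_sub_L1 (hHcar : (H : Set G) = Hset 𝒜) {l : D} (hl : l ∈ Lset 𝒜) :
    l ∈ L1ring 𝒜 hG H := by
  rw [mem_L1_iff]
  refine ⟨?_, grade_one_sub_DNH 𝒜 hG H hl.1⟩
  intro d hd
  refine AddSubgroup.iSup_induction (C := fun d => d * l = l * d) _ hd ?_ (by simp) ?_
  · rintro ⟨h, hh⟩ a ha
    have : h ∈ Hset 𝒜 := hHcar ▸ hh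
    exact this a ha l hl
  · intro a b ha hb; rw [add_mul, mul_add, ha, hb]

include hG in
lemma central_prj_comm [Fintype G] {k : D} (hk : k ∈ Subring.center D) (h : G)
    {y : D} (hy : y ∈ 𝒜 1) : y * prj 𝒜 hG h k = prj 𝒜 hG h k * y := by
  have h1 : prj 𝒜 hG h (y * k) = y * prj 𝒜 hG h k := by
    have := prj_mul_left 𝒜 hG hy h k; rwa [one_mul] at this
  have h2 : prj 𝒜 hG h (k * y) = prj 𝒜 hG h k * y := by
    have := prj_mul_right 𝒜 hG hy h k; rwa [mul_one] at this
  rw [← h1, ← h2, Subring.mem_center_iff.mp hk y]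

include hG in
lemma central_support_Hset [Fintype G] {k : D} (hk : k ∈ Subring.center D) {h : G}
    (hne : prj 𝒜 hG h k ≠ 0) : h ∈ Hset 𝒜 := by
  intro x hx l hl
  set kh := prj 𝒜 hG h k with hkh
  have hkhmem : kh ∈ 𝒜 h := prj_mem 𝒜 hG h k
  have hinv : kh⁻¹ ∈ 𝒜 h⁻¹ := inv_mem_grade 𝒜 hG hkhmem hne
  have hxk : x * kh⁻¹ ∈ 𝒜 1 := by
    have := hG.mul_mem hx hinv
    rwa [mul_inv_cancel] at this
  have hxeq : x = x * kh⁻¹ * kh := by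
    rw [mul_assoc, inv_mul_cancel₀ hne, mul_one]
  calc x * l = x * kh⁻¹ * (kh * l) := by conv_lhs => rw [hxeq, mul_assoc]
    _ = x * kh⁻¹ * (l * kh) := by
        rw [← central_prj_comm 𝒜 hG hk h hl.1]
    _ = (x * kh⁻¹ * l) * kh := by noncomm_ring
    _ = (l * (x * kh⁻¹)) * kh := by rw [hl.2 _ hxk]
    _ = l * x := by rw [mul_assoc, ← hxeq]

include hG in
lemma central_mem_DNH [Fintype G] (hHcar : (H : Set G) = Hset 𝒜) {k : D}
    (hk : k ∈ Subring.center D) : k ∈ DN 𝒜 (H : Set G) := by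
  refine mem_DN_of_prj 𝒜 hG fun g hne => ?_
  have := central_support_Hset 𝒜 hG hk hne
  rw [hHcar]; exact this

lemma central_mem_L1 [Fintype G] (hHcar : (H : Set G) = Hset 𝒜) {k : D}
    (hk : k ∈ Subring.center D) : k ∈ L1ring 𝒜 hG H := by
  rw [mem_L1_iff]
  exact ⟨fun d _ => (Subring.mem_center_iff.mp hk d).symm ▸ rfl,
    central_mem_DNH 𝒜 hG H hHcar hk⟩

include hG in
lemma conj_mem_L1 [Fintype G] (hHn : H.Normal) {g : G} {x : D} (hx : x ∈ 𝒜 g)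
    (hx0 : x ≠ 0) {l : D} (hl : l ∈ L1ring 𝒜 hG H) :
    x * l * x⁻¹ ∈ L1ring 𝒜 hG H := by
  rw [mem_L1_iff] at hl ⊢
  obtain ⟨hc, hm⟩ := hl
  constructor
  · intro d hd
    have hinv : x⁻¹ ∈ 𝒜 g⁻¹ := inv_mem_grade 𝒜 hG hx hx0
    have hinv0 : x⁻¹ ≠ 0 := inv_ne_zero hx0
    have hdx : x⁻¹ * d * x ∈ DN 𝒜 (H : Set G) := by
      have := conj_mem_DNH 𝒜 hG H hHn hinv hinv0 hd
      rwa [inv_inv] at this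
    have hcomm := hc _ hdx
    calc d * (x * l * x⁻¹)
        = x * ((x⁻¹ * d * x) * l) * x⁻¹ := by
          rw [show x * ((x⁻¹ * d * x) * l) * x⁻¹
              = (x * x⁻¹) * (d * (x * l * x⁻¹)) from by noncomm_ring,
            mul_inv_cancel₀ hx0, one_mul]
      _ = x * (l * (x⁻¹ * d * x)) * x⁻¹ := by rw [hcomm]
      _ = (x * l * x⁻¹) * d := by
          rw [show x * (l * (x⁻¹ * d * x)) * x⁻¹
              = (x * l * x⁻¹) * d * (x * x⁻¹) from by noncomm_ring,
            mul_inv_cancel₀ hx0, mul_one]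
  · exact conj_mem_DNH 𝒜 hG H hHn hx hx0 hm

include hG in
lemma conj_indep [Fintype G] {g : G} {x y : D} (hx : x ∈ 𝒜 g) (hy : y ∈ 𝒜 g)
    (hx0 : x ≠ 0) (hy0 : y ≠ 0) {l : D} (hl : l ∈ L1ring 𝒜 hG H) :
    x * l * x⁻¹ = y * l * y⁻¹ := by
  have hyx : y⁻¹ * x ∈ 𝒜 1 := by
    have := hG.mul_mem (inv_mem_grade 𝒜 hG hy hy0) hx
    rwa [inv_mul_cancel] at this
  have hcomm : (y⁻¹ * x) * l = l * (y⁻¹ * x) :=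
    ((mem_L1_iff 𝒜 hG H).mp hl).1 _ (grade_one_sub_DNH 𝒜 hG H hyx)
  have h1 : x * l * x⁻¹ = y * ((y⁻¹ * x) * l) * x⁻¹ := by
    rw [show y * ((y⁻¹ * x) * l) * x⁻¹ = (y * y⁻¹) * (x * l * x⁻¹) from by noncomm_ring,
      mul_inv_cancel₀ hy0, one_mul]
  rw [h1, hcomm,
    show y * (l * (y⁻¹ * x)) * x⁻¹ = (y * l * y⁻¹) * (x * x⁻¹) from by noncomm_ring,
    mul_inv_cancel₀ hx0, mul_one]

include hG in
lemma L1_comm {a b : D} (ha : a ∈ L1ring 𝒜 hG H) (hb : b ∈ L1ring 𝒜 hG H) :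
    a * b = b * a :=
  ((mem_L1_iff 𝒜 hG H).mp hb).1 a ((mem_L1_iff 𝒜 hG H).mp ha).2

include hG in
lemma DNH_inv_mem [Fintype G] (hHcar : (H : Set G) = Hset 𝒜)
    [Module.Finite ↥(Subring.center D) D] {d : D}
    (hd : d ∈ DN 𝒜 (H : Set G)) (hd0 : d ≠ 0) : d⁻¹ ∈ DN 𝒜 (H : Set G) := by
  classical
  let S : Submodule ↥(Subring.center D) D :=
    { carrier := DN 𝒜 (H : Set G)
      add_mem' := fun ha hb => add_mem ha hb
      zero_mem' := zero_mem _
      smul_mem' := fun k x hx => by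
        have hk : (k : D) ∈ DN 𝒜 (H : Set G) := central_mem_DNH 𝒜 hG H hHcar k.2
        have := DN_mul_mem 𝒜 hG (fun a ha b hb => H.mul_mem ha hb) hk hx
        exact this }
  let f : S →ₗ[↥(Subring.center D)] S :=
    { toFun := fun s => ⟨d * s, DN_mul_mem 𝒜 hG (fun a ha b hb => H.mul_mem ha hb) hd s.2⟩
      map_add' := by intro a b; ext; simp [mul_add]
      map_smul' := by
        intro k a; ext
        simp only [SetLike.val_smul, RingHom.id_apply]
        show d * ((k : D) * (a : D)) = (k : D) * (d * (a : D))
        rw [← mul_assoc, ← mul_assoc, Subring.mem_center_iff.mp k.2 d] }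
  have hinj : Function.Injective f := by
    intro a b hab
    have h : d * (a : D) = d * (b : D) := congrArg Subtype.val hab
    exact Subtype.ext (mul_left_cancel₀ hd0 h)
  obtain ⟨y, hy⟩ := (LinearMap.injective_iff_surjective).mp hinj
    ⟨1, one_mem_DNH 𝒜 hG H⟩
  have h1 : d * (y : D) = 1 := congrArg Subtype.val hy
  rw [inv_eq_of_mul_eq_one_right h1]
  exact y.2

include hG in
lemma L1_inv_mem [Fintype G] (hHcar : (H : Set G) = Hset 𝒜)
    [Module.Finite ↥(Subring.center D) D] {l : D}
    (hl : l ∈ L1ring 𝒜 hG H) : l⁻¹ ∈ L1ring 𝒜 hG H := by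
  by_cases h0 : l = 0
  · rw [h0, inv_zero]; exact zero_mem _
  rw [mem_L1_iff] at hl ⊢
  refine ⟨?_, DNH_inv_mem 𝒜 hG H hHcar hl.2 h0⟩
  intro d hd
  have h := hl.1 d hd
  have h2 : l⁻¹ * (d * l) * l⁻¹ = l⁻¹ * (l * d) * l⁻¹ := by rw [h]
  rw [show l⁻¹ * (d * l) * l⁻¹ = l⁻¹ * d * (l * l⁻¹) from by noncomm_ring,
    show l⁻¹ * (l * d) * l⁻¹ = (l⁻¹ * l) * (d * l⁻¹) from by noncomm_ring,
    mul_inv_cancel₀ h0, inv_mul_cancel₀ h0, mul_one, one_mul] at h2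
  exact h2.symm

include hG in
lemma L1_isField [Fintype G] (hHcar : (H : Set G) = Hset 𝒜)
    [Module.Finite ↥(Subring.center D) D] :
    IsField ↥(L1ring 𝒜 hG H) := by
  refine ⟨⟨0, 1, fun h => ?_⟩, fun {a b} => ?_, fun {a} ha => ?_⟩
  · exact zero_ne_one (congrArg Subtype.val h)
  · exact Subtype.ext (L1_comm 𝒜 hG H a.2 b.2)
  · refine ⟨⟨(a : D)⁻¹, L1_inv_mem 𝒜 hG H hHcar a.2⟩, ?_⟩
    exact Subtype.ext (mul_inv_cancel₀ (fun h => ha (Subtype.ext h)))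

include hG in
lemma comm_of_comm_rep [Fintype G] {g : G} {x x₀ : D} (hx : x ∈ 𝒜 g) (hx₀ : x₀ ∈ 𝒜 g)
    (h0 : x₀ ≠ 0) {l : D} (hl : l ∈ L1ring 𝒜 hG H) (hcomm : x₀ * l = l * x₀) :
    x * l = l * x := by
  have hx1 : x * x₀⁻¹ ∈ 𝒜 1 := by
    have := hG.mul_mem hx (inv_mem_grade 𝒜 hG hx₀ h0)
    rwa [mul_inv_cancel] at this
  have hc := ((mem_L1_iff 𝒜 hG H).mp hl).1 _ (grade_one_sub_DNH 𝒜 hG H hx1)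
  have hxeq : x = x * x₀⁻¹ * x₀ := by rw [mul_assoc, inv_mul_cancel₀ h0, mul_one]
  calc x * l = x * x₀⁻¹ * (x₀ * l) := by conv_lhs => rw [hxeq, mul_assoc]
    _ = x * x₀⁻¹ * (l * x₀) := by rw [hcomm]
    _ = ((x * x₀⁻¹) * l) * x₀ := by rw [← mul_assoc]
    _ = (l * (x * x₀⁻¹)) * x₀ := by rw [hc]
    _ = l * x := by rw [mul_assoc, ← hxeq]

lemma comm_of_conj_eq {x l : D} (h0 : x ≠ 0) (h : x * l * x⁻¹ = l) :
    x * l = l * x := by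
  have h2 := congrArg (· * x) h
  simpa [mul_assoc, inv_mul_cancel₀ h0] using h2

end Mid

end Aux

/-- Under the standing hypotheses, with `L₁ = Z(D_H)`: `K ⊆ L₁`;
conjugation by nonzero homogeneous elements preserves `L₁`, is independent of the chosen
representative, and yields an action `ρ` of `G` on `L₁` whose kernel is exactly `H` and
whose fixed field is exactly `K`; and `L₁/K` is Galois with Galois group `G/H`
(equivalently, by Artin's theorem: the fixed field of the image of `ρ` is `K` and the
image of `ρ` is the full group of automorphisms of `L₁` fixing `K` pointwise). -/
theorem center_DH_action_and_galois
    [Finite G] [CharZero D]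
    (𝒜 : G → AddSubgroup D) (hG : IsFaithfulGrading 𝒜)
    [Module.Finite ↥(Subring.center D) D]
    (ζ : D) (hζK : ζ ∈ Subring.center D) (hζe : ζ ∈ 𝒜 1)
    (hζ : orderOf ζ = Monoid.exponent G)
    (H : Subgroup G) (hHcar : (H : Set G) = Hset 𝒜) (hHn : H.Normal) :
    -- `K ⊆ L₁`
    (∀ x ∈ Subring.center D, x ∈ L1ring 𝒜 hG H) ∧
    -- conjugation by nonzero homogeneous elements preserves `L₁` …
    (∀ g : G, ∀ x ∈ 𝒜 g, x ≠ 0 → ∀ l ∈ L1ring 𝒜 hG H, x * l * x⁻¹ ∈ L1ring 𝒜 hG H) ∧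
    -- … and is independent of the choice of the nonzero homogeneous element
    (∀ g : G, ∀ x ∈ 𝒜 g, ∀ y ∈ 𝒜 g, x ≠ 0 → y ≠ 0 →
      ∀ l ∈ L1ring 𝒜 hG H, x * l * x⁻¹ = y * l * y⁻¹) ∧
    -- the resulting action `ρ` of `G` on `L₁` has kernel exactly `H`, fixed field
    -- exactly `K`, and image the full group of automorphisms of `L₁` fixing `K`
    -- pointwise (so `L₁/K` is Galois with Galois group `G/H`)
    ∃ ρ : G →* RingAut ↥(L1ring 𝒜 hG H),
      (∀ g : G, ∀ x ∈ 𝒜 g, x ≠ 0 →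
        ∀ l : ↥(L1ring 𝒜 hG H), (ρ g l : D) = x * (l : D) * x⁻¹) ∧
      MonoidHom.ker ρ = H ∧
      (∀ l : ↥(L1ring 𝒜 hG H), (∀ g : G, ρ g l = l) ↔ (l : D) ∈ Subring.center D) ∧
      (∀ σ : RingAut ↥(L1ring 𝒜 hG H),
        (∃ g : G, ρ g = σ) ↔
          ∀ l : ↥(L1ring 𝒜 hG H), (l : D) ∈ Subring.center D → σ l = l) := by
  classical
  haveI : Fintype G := Fintype.ofFinite G
  have hexists : ∀ g : G, ∃ x : D, x ∈ 𝒜 g ∧ x ≠ 0 := by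
    intro g
    by_contra hcon
    push_neg at hcon
    refine hG.faithful g ?_
    ext x
    simp only [AddSubgroup.mem_bot]
    exact ⟨fun hx => hcon x hx, fun hx => hx ▸ (𝒜 g).zero_mem⟩
  choose xg hxg hxg0 using hexists
  have hconjmem : ∀ (g : G) (l : ↥(L1ring 𝒜 hG H)),
      xg g * (l : D) * (xg g)⁻¹ ∈ L1ring 𝒜 hG H :=
    fun g l => conj_mem_L1 𝒜 hG H hHn (hxg g) (hxg0 g) l.2
  let c : G → ↥(L1ring 𝒜 hG H) → ↥(L1ring 𝒜 hG H) := fun g l =>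
    ⟨xg g * (l : D) * (xg g)⁻¹, hconjmem g l⟩
  have hc_indep : ∀ g : G, ∀ x ∈ 𝒜 g, x ≠ 0 →
      ∀ l : ↥(L1ring 𝒜 hG H), (c g l : D) = x * (l : D) * x⁻¹ :=
    fun g x hx hx0 l => conj_indep 𝒜 hG H (hxg g) hx (hxg0 g) hx0 l.2
  have hc_comp : ∀ g h : G, ∀ l, c g (c h l) = c (g * h) l := by
    intro g h l
    apply Subtype.ext
    have hmem : xg g * xg h ∈ 𝒜 (g * h) := hG.mul_mem (hxg g) (hxg h)
    have h0 : xg g * xg h ≠ 0 := mul_ne_zero (hxg0 g) (hxg0 h)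
    have key := hc_indep (g * h) _ hmem h0 l
    show xg g * (xg h * (l : D) * (xg h)⁻¹) * (xg g)⁻¹ = _
    rw [key, mul_inv_rev]
    noncomm_ring
  have hc_one : ∀ l, c 1 l = l := by
    intro l
    apply Subtype.ext
    rw [hc_indep 1 1 hG.one_mem one_ne_zero l]
    simp
  have hc_mul : ∀ (g : G) (a b : ↥(L1ring 𝒜 hG H)), c g (a * b) = c g a * c g b := by
    intro g a b
    apply Subtype.ext
    show xg g * ((a : D) * (b : D)) * (xg g)⁻¹
      = (xg g * (a : D) * (xg g)⁻¹) * (xg g * (b : D) * (xg g)⁻¹)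
    rw [show (xg g * (a : D) * (xg g)⁻¹) * (xg g * (b : D) * (xg g)⁻¹)
        = xg g * (a : D) * ((xg g)⁻¹ * xg g) * ((b : D) * (xg g)⁻¹) from by noncomm_ring,
      inv_mul_cancel₀ (hxg0 g), mul_one]
    noncomm_ring
  let ρfun : G → RingAut ↥(L1ring 𝒜 hG H) := fun g =>
    { toFun := c g
      invFun := c g⁻¹
      left_inv := fun l => by rw [hc_comp, inv_mul_cancel, hc_one]
      right_inv := fun l => by rw [hc_comp, mul_inv_cancel, hc_one]
      map_mul' := hc_mul g
      map_add' := fun a b => Subtype.ext (by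
        show xg g * ((a : D) + (b : D)) * (xg g)⁻¹
          = xg g * (a : D) * (xg g)⁻¹ + xg g * (b : D) * (xg g)⁻¹
        noncomm_ring) }
  let ρ : G →* RingAut ↥(L1ring 𝒜 hG H) := MonoidHom.mk' ρfun (by
    intro g h
    apply RingEquiv.ext
    intro l
    exact (hc_comp g h l).symm)
  have hρ_apply : ∀ (g : G) (l : ↥(L1ring 𝒜 hG H)),
      (ρ g l : D) = xg g * (l : D) * (xg g)⁻¹ := fun g l => rfl
  have hfix_iff : ∀ l : ↥(L1ring 𝒜 hG H),
      (∀ g : G, ρ g l = l) ↔ (l : D) ∈ Subring.center D := by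
    intro l
    constructor
    · intro hf
      rw [Subring.mem_center_iff]
      intro d
      have hcomm : ∀ (g : G) (x : D), x ∈ 𝒜 g → x * (l : D) = (l : D) * x := by
        intro g x hx
        refine comm_of_comm_rep 𝒜 hG H hx (hxg g) (hxg0 g) l.2 ?_
        exact comm_of_conj_eq (hxg0 g) (congrArg Subtype.val (hf g))
      conv_lhs => rw [← sum_prj 𝒜 hG d]
      conv_rhs => rw [← sum_prj 𝒜 hG d]
      rw [Finset.sum_mul, Finset.mul_sum]
      exact Finset.sum_congr rfl fun g _ => hcomm g _ (prj_mem 𝒜 hG g d)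
    · intro hc g
      apply Subtype.ext
      rw [hρ_apply, Subring.mem_center_iff.mp hc (xg g), mul_assoc,
        mul_inv_cancel₀ (hxg0 g), mul_one]
  refine ⟨fun x hx => central_mem_L1 𝒜 hG H hHcar hx,
    fun g x hx hx0 l hl => conj_mem_L1 𝒜 hG H hHn hx hx0 hl,
    fun g x hx y hy hx0 hy0 l hl => conj_indep 𝒜 hG H hx hy hx0 hy0 hl,
    ρ, fun g x hx hx0 l => hc_indep g x hx hx0 l, ?_, hfix_iff, ?_⟩
  · -- kernel = H
    ext g
    rw [MonoidHom.mem_ker]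
    constructor
    · intro hker
      rw [← SetLike.mem_coe, hHcar]
      intro x hx l hl
      by_cases hx0 : x = 0
      · simp [hx0]
      have hlL1 : l ∈ L1ring 𝒜 hG H := Lset_sub_L1 𝒜 hG H hHcar hl
      refine comm_of_comm_rep 𝒜 hG H hx (hxg g) (hxg0 g) hlL1 ?_
      have := congrArg Subtype.val (RingEquiv.ext_iff.mp hker ⟨l, hlL1⟩)
      exact comm_of_conj_eq (hxg0 g) this
    · intro hg
      apply RingEquiv.ext
      intro l
      apply Subtype.ext
      rw [hρ_apply]
      have hmem : xg g ∈ DN 𝒜 (H : Set G) := mem_DN 𝒜 hg (hxg g)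
      have := ((mem_L1_iff 𝒜 hG H).mp l.2).1 _ hmem
      rw [this, mul_assoc, mul_inv_cancel₀ (hxg0 g), mul_one]
      rfl
  · -- Galois / Artin part
    intro σ
    constructor
    · rintro ⟨g, rfl⟩ l hl
      apply Subtype.ext
      rw [hρ_apply, Subring.mem_center_iff.mp hl (xg g), mul_assoc,
        mul_inv_cancel₀ (hxg0 g), mul_one]
    · intro hσ
      letI : Field ↥(L1ring 𝒜 hG H) := (L1_isField 𝒜 hG H hHcar).toField
      haveI hΓfin : Finite ↥ρ.range := (Set.finite_range ρ).to_subtype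
      haveI : FaithfulSMul ↥ρ.range ↥(L1ring 𝒜 hG H) := by
        constructor
        intro σ₁ σ₂ h
        apply Subtype.ext
        apply RingEquiv.ext
        intro l
        exact h l
      have hfixmem : ∀ l : ↥(L1ring 𝒜 hG H),
          l ∈ FixedPoints.subfield ↥ρ.range ↥(L1ring 𝒜 hG H) ↔
            (l : D) ∈ Subring.center D := by
        intro l
        rw [FixedPoints.subfield, ← SetLike.mem_coe, Subfield.coe_copy, MulAction.mem_fixedPoints]
        constructor
        · intro hf
          exact (hfix_iff l).mp fun g => hf ⟨ρ g, g, rfl⟩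
        · intro hcen γ
          obtain ⟨g, hg⟩ := γ.2
          show (γ : RingAut ↥(L1ring 𝒜 hG H)) l = l
          exact hg ▸ (hfix_iff l).mpr hcen g
      let σ' : ↥(L1ring 𝒜 hG H) →ₐ[FixedPoints.subfield ↥ρ.range ↥(L1ring 𝒜 hG H)]
          ↥(L1ring 𝒜 hG H) :=
        { toRingHom := (σ : ↥(L1ring 𝒜 hG H) →+* ↥(L1ring 𝒜 hG H))
          commutes' := fun k => hσ (k : ↥(L1ring 𝒜 hG H)) ((hfixmem _).mp k.2) }
      obtain ⟨γ, hγ⟩ :=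
        (FixedPoints.toAlgHom_bijective ↥ρ.range ↥(L1ring 𝒜 hG H)).2 σ'
      obtain ⟨g, hg⟩ := γ.2
      refine ⟨g, ?_⟩
      apply RingEquiv.ext
      intro l
      have h1 : γ • l = σ l := by
        have := congrArg (fun f => f l) hγ
        have h2 : γ • l = σ' l := by simpa using this
        exact h2
      calc ρ g l = γ • l := by
            show (ρ g) l = (γ : RingAut ↥(L1ring 𝒜 hG H)) l
            rw [hg]
        _ = σ l := h1
end
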